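/- arXiv:1004.3603 — 3 statements merged into one kernel-verified Lean document; each statement's English description precedes it below -/
import Mathlib

section
/- Let F be a field of characteristic different from 2 and let M be a 2×2 matrix over F. Then M ∈ Ξ_2(F) if and only if M is not symmetric (M ≠ Mᵀ). -/
/-! A symmetric `M` is fixed by an `M`-orthogonal reflection, which has determinant `-1`: when
`M ≠ 0` and `2 ≠ 0`, polarization gives `v` with `vᵀMv ≠ 0`, and `S = 1 - (2 / vᵀMv) v (Mv)ᵀ`
satisfies `SᵀMS = M`; when `M = 0` any reflection will do.
Conversely, `SᵀMS = M` forces `Sᵀ(M - Mᵀ)S = M - Mᵀ`. In size 2 the skew part is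
`M - Mᵀ = c J` with `J = [[0, 1], [-1, 0]]` and `c = M₀₁ - M₁₀`, and `SᵀJS = (det S) J`, so `c ≠ 0`
forces `det S = 1`. -/

open Matrix Polynomial

variable {F : Type*} [Field F]

/-- `M ∈ Ξ_n(F)`: every invertible `S` with `SᵀMS = M` has `det S = 1`. -/
def XiMem {n : ℕ} (M : Matrix (Fin n) (Fin n) F) : Prop :=
  ∀ S : Matrix (Fin n) (Fin n) F, IsUnit S → Sᵀ * M * S = M → S.det = 1

/-- Congruence of square matrices: `SᵀAS = B` for some invertible `S`. -/
def MatCongruent {n : ℕ} (A B : Matrix (Fin n) (Fin n) F) : Prop :=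
  ∃ S : Matrix (Fin n) (Fin n) F, IsUnit S ∧ Sᵀ * A * S = B

/-- Similarity of square matrices: `S⁻¹AS = B` for some invertible `S`. -/
def MatSimilar {n : ℕ} (A B : Matrix (Fin n) (Fin n) F) : Prop :=
  ∃ S : Matrix (Fin n) (Fin n) F, IsUnit S ∧ S⁻¹ * A * S = B

/-- Block-diagonal direct sum `A ⊕ B`. -/
def dSum {a b : ℕ} (A : Matrix (Fin a) (Fin a) F) (B : Matrix (Fin b) (Fin b) F) :
    Matrix (Fin (a + b)) (Fin (a + b)) F :=
  Matrix.reindex finSumFinEquiv finSumFinEquiv (Matrix.fromBlocks A 0 0 B)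

/-- Skew sum `[A ╲ B] = [[0, B], [A, 0]]` of two `m × m` matrices. -/
def skewSum {m : ℕ} (A B : Matrix (Fin m) (Fin m) F) :
    Matrix (Fin (m + m)) (Fin (m + m)) F :=
  Matrix.reindex finSumFinEquiv finSumFinEquiv (Matrix.fromBlocks 0 B A 0)

/-- `A` is a direct summand of `M` for congruence. -/
def CongSummand {n r : ℕ} (M : Matrix (Fin n) (Fin n) F)
    (A : Matrix (Fin r) (Fin r) F) : Prop :=
  ∃ (s : ℕ) (h : r + s = n) (B : Matrix (Fin s) (Fin s) F),
    MatCongruent M (Matrix.reindex (finCongr h) (finCongr h) (dSum A B))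

/-- `A` is a direct summand of `M` for similarity. -/
def SimSummand {n r : ℕ} (M : Matrix (Fin n) (Fin n) F)
    (A : Matrix (Fin r) (Fin r) F) : Prop :=
  ∃ (s : ℕ) (h : r + s = n) (B : Matrix (Fin s) (Fin s) F),
    MatSimilar M (Matrix.reindex (finCongr h) (finCongr h) (dSum A B))

/-- `(A, B)` is a direct summand of the pair `(M, N)` for equivalence:
`(M, N)` is equivalent to `(A, B) ⊕ (C, D)` for some pair `(C, D)`. -/
def PairSummand {n a b : ℕ} (M N : Matrix (Fin n) (Fin n) F)
    (A B : Matrix (Fin a) (Fin b) F) : Prop :=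
  ∃ (c d : ℕ) (hc : a + c = n) (hd : b + d = n)
    (C D : Matrix (Fin c) (Fin d) F)
    (R S : Matrix (Fin n) (Fin n) F), IsUnit R ∧ IsUnit S ∧
      R * M * S = Matrix.reindex (finSumFinEquiv.trans (finCongr hc))
          (finSumFinEquiv.trans (finCongr hd)) (Matrix.fromBlocks A 0 0 C) ∧
      R * N * S = Matrix.reindex (finSumFinEquiv.trans (finCongr hc))
          (finSumFinEquiv.trans (finCongr hd)) (Matrix.fromBlocks B 0 0 D)

/-- The `r × r` Jordan block `J_r(λ)`: `λ` on the diagonal, `1` on the subdiagonal. -/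
def jordanBlock (r : ℕ) (lam : F) : Matrix (Fin r) (Fin r) F :=
  Matrix.of fun i j =>
    if (i : ℕ) = (j : ℕ) then lam else if (i : ℕ) = (j : ℕ) + 1 then 1 else 0

/-- The matrix `Γ_r`: with 1-based indices, entry `(i, j)` is `(-1)^(r - i)` if
`i + j = r + 1` or `i + j = r + 2`, and `0` otherwise. -/
def Gam (r : ℕ) : Matrix (Fin r) (Fin r) F :=
  Matrix.of fun i j =>
    if (i : ℕ) + (j : ℕ) = r - 1 ∨ (i : ℕ) + (j : ℕ) = r then
      (-1 : F) ^ (r - 1 - (i : ℕ)) else 0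

/-- Companion matrix of a monic polynomial `x^m + c₁x^(m-1) + ⋯ + c_m`:
`1`'s on the subdiagonal, last column `(-c_m, …, -c₂, -c₁)ᵀ`. -/
def companion (q : Polynomial F) : Matrix (Fin q.natDegree) (Fin q.natDegree) F :=
  Matrix.of fun i j =>
    if (j : ℕ) = q.natDegree - 1 then -q.coeff (i : ℕ)
    else if (i : ℕ) = (j : ℕ) + 1 then 1 else 0

/-- A Frobenius block: the companion matrix of `p^l` with `p` monic irreducible, `l ≥ 1`. -/
def IsFrobeniusBlock {m : ℕ} (A : Matrix (Fin m) (Fin m) F) : Prop :=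
  ∃ (p : Polynomial F) (l : ℕ), p.Monic ∧ Irreducible p ∧ 1 ≤ l ∧
    ∃ h : (p ^ l).natDegree = m,
      A = Matrix.reindex (finCongr h) (finCongr h) (companion (p ^ l))

/-- `Φ` is a cosquare: `Φ = A⁻ᵀA` for some invertible `A`. -/
def IsCosquare {m : ℕ} (A : Matrix (Fin m) (Fin m) F) : Prop :=
  ∃ Q : Matrix (Fin m) (Fin m) F, IsUnit Q ∧ Q⁻¹ᵀ * Q = A

/-- The `(t-1) × t` matrix `F_t` with `F_t(i, j) = 1` iff `j = i`. -/
def Fmat (t : ℕ) : Matrix (Fin (t - 1)) (Fin t) F :=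
  Matrix.of fun i j => if (j : ℕ) = (i : ℕ) then 1 else 0

/-- The `(t-1) × t` matrix `G_t` with `G_t(i, j) = 1` iff `j = i + 1`. -/
def Gmat (t : ℕ) : Matrix (Fin (t - 1)) (Fin t) F :=
  Matrix.of fun i j => if (j : ℕ) = (i : ℕ) + 1 then 1 else 0

namespace Matrix

variable {n : Type*} [Fintype n] {R : Type*} [CommRing R]

theorem transpose_mul_mul_sub_transpose {S M : Matrix n n R} (h : Sᵀ * M * S = M) :
    Sᵀ * (M - Mᵀ) * S = M - Mᵀ := by
  conv_rhs => rw [← h]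
  simp only [mul_sub, sub_mul, transpose_mul, transpose_transpose, Matrix.mul_assoc]

variable [DecidableEq n]

theorem det_one_sub_vecMulVec (u w : n → R) : (1 - vecMulVec u w).det = 1 - w ⬝ᵥ u := by
  rw [sub_eq_add_neg, ← neg_vecMulVec, vecMulVec_eq Unit,
    det_one_add_replicateCol_mul_replicateRow, dotProduct_neg, ← sub_eq_add_neg]

theorem IsSymm.exists_dotProduct_mulVec_self_ne_zero {M : Matrix n n F} (hM : M.IsSymm)
    (hM0 : M ≠ 0) (h2 : (2 : F) ≠ 0) : ∃ v, v ⬝ᵥ M *ᵥ v ≠ 0 := by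
  have : Invertible (2 : F) := invertibleOfNonzero h2
  simpa only [toBilin'_apply'] using LinearMap.BilinForm.exists_bilinForm_self_ne_zero
    ((map_ne_zero_iff _ (toBilin' (n := n) (R₁ := F)).injective).mpr hM0)
    (LinearMap.BilinForm.isSymm_iff.mp (isSymm_toBilin'_iff_isSymm.mpr hM))

theorem IsSymm.transpose_reflection_mul_mul_reflection {M : Matrix n n R} (hM : M.IsSymm)
    {c : R} {v : n → R} (hc : c * (v ⬝ᵥ M *ᵥ v) = 2) :
    (1 - c • vecMulVec v (M *ᵥ v))ᵀ * M * (1 - c • vecMulVec v (M *ᵥ v)) = M := by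
  set w := M *ᵥ v
  have hPM : (vecMulVec v w)ᵀ * M = vecMulVec w w := by
    rw [transpose_vecMulVec, vecMulVec_mul, ← hM.eq, vecMul_transpose]
  have hMP : M * vecMulVec v w = vecMulVec w w := mul_vecMulVec M v w
  have hQP : vecMulVec w w * vecMulVec v w = (v ⬝ᵥ w) • vecMulVec w w := by
    rw [vecMulVec_mul_vecMulVec, vecMulVec_smul, dotProduct_comm]
  calc (1 - c • vecMulVec v w)ᵀ * M * (1 - c • vecMulVec v w)
      = M - c • ((vecMulVec v w)ᵀ * M) - c • (M * vecMulVec v w)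
          + (c * c) • ((vecMulVec v w)ᵀ * M * vecMulVec v w) := by
        simp only [transpose_sub, transpose_one, transpose_smul, sub_mul, mul_sub, one_mul,
          mul_one, Matrix.smul_mul, Matrix.mul_smul, smul_smul]
        abel
    _ = M + (c * (c * (v ⬝ᵥ w)) - 2 * c) • vecMulVec w w := by
        rw [hPM, hMP, hQP]; module
    _ = M := by rw [hc, mul_comm, sub_self, zero_smul, add_zero]

theorem IsSymm.exists_det_eq_neg_one_transpose_mul_mul_self [Nonempty n] {M : Matrix n n F}
    (hM : M.IsSymm) (h2 : (2 : F) ≠ 0) : ∃ S : Matrix n n F, S.det = -1 ∧ Sᵀ * M * S = M := by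
  rcases eq_or_ne M 0 with rfl | hM0
  · obtain ⟨i⟩ := ‹Nonempty n›
    refine ⟨1 - vecMulVec (Pi.single i 1) (Pi.single i 2), ?_, by simp⟩
    rw [det_one_sub_vecMulVec]
    norm_num
  · obtain ⟨v, hv⟩ := hM.exists_dotProduct_mulVec_self_ne_zero hM0 h2
    have hc : 2 / (v ⬝ᵥ M *ᵥ v) * (v ⬝ᵥ M *ᵥ v) = 2 := div_mul_cancel₀ 2 hv
    refine ⟨_, ?_, hM.transpose_reflection_mul_mul_reflection hc⟩
    rw [← vecMulVec_smul, det_one_sub_vecMulVec, smul_dotProduct, dotProduct_comm (M *ᵥ v),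
      smul_eq_mul, hc]
    norm_num

theorem transpose_mul_mul_eq_det_smul_fin_two (S : Matrix (Fin 2) (Fin 2) R) :
    Sᵀ * !![0, 1; -1, 0] * S = S.det • !![0, 1; -1, 0] := by
  ext i j
  fin_cases i <;> fin_cases j <;> simp [det_fin_two, mul_apply, Fin.sum_univ_two] <;> ring

theorem sub_transpose_eq_smul_fin_two (M : Matrix (Fin 2) (Fin 2) R) :
    M - Mᵀ = (M 0 1 - M 1 0) • !![0, 1; -1, 0] := by
  ext i j
  fin_cases i <;> fin_cases j <;> simp

end Matrix

theorem not_xiMem_of_isSymm {n : ℕ} [NeZero n] {M : Matrix (Fin n) (Fin n) F}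
    (hM : M.IsSymm) (h2 : (2 : F) ≠ 0) : ¬XiMem M := by
  intro hXi
  obtain ⟨S, hdet, hS⟩ := hM.exists_det_eq_neg_one_transpose_mul_mul_self h2
  have hunit : IsUnit S := by
    rw [isUnit_iff_isUnit_det, hdet]; exact isUnit_one.neg
  have hneg : (-1 : F) = 1 := hdet ▸ hXi S hunit hS
  exact h2 (by linear_combination -hneg)

theorem xiMem_of_ne_transpose {M : Matrix (Fin 2) (Fin 2) F} (hM : M ≠ Mᵀ) : XiMem M := by
  intro S _ hS
  have hc : M 0 1 - M 1 0 ≠ 0 := by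
    intro hc
    rw [← sub_ne_zero, sub_transpose_eq_smul_fin_two, hc, zero_smul] at hM
    exact hM rfl
  have hskew := transpose_mul_mul_sub_transpose hS
  rw [sub_transpose_eq_smul_fin_two, Matrix.mul_smul, Matrix.smul_mul,
    transpose_mul_mul_eq_det_smul_fin_two, smul_smul] at hskew
  simpa [hc] using congrFun₂ hskew 0 1

/-- a `2 × 2` matrix `M` is in `Ξ_2(F)` iff `M` is not symmetric. -/
theorem stmt_2 {F : Type*} [Field F] (hchar : (2 : F) ≠ 0)
    (M : Matrix (Fin 2) (Fin 2) F) :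
    XiMem M ↔ M ≠ Mᵀ :=
  ⟨fun hXi hM => not_xiMem_of_isSymm hM.symm hchar hXi, xiMem_of_ne_transpose⟩
end

section
/- Let F be a field of characteristic different from 2 and let r ≥ 1. The matrix Γ_r is invertible, and Γ_r^{-T}Γ_r is similar to the Jordan block J_r((−1)^{r+1}). -/
open Matrix Polynomial

variable {F : Type*} [Field F]

/-! With `λ = (-1)^n`, the matrix `Γ_{n+1}` has the explicit inverse `gamInv (n + 1)`, whose
entries are `(-1)^i` on and above the antidiagonal, and a direct computation gives
`Γ⁻ᵀΓ = λ • 1 + M` where `M` is strictly upper triangular with every entry above the diagonal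
equal to `2λ ≠ 0`. Such an `M` satisfies `(M ^ k) i (i + k) = (2λ) ^ k`, so `e_last` is a cyclic
vector for `M`, and in the Krylov basis `M ^ k e_last` the matrix `λ • 1 + M` becomes `J(λ)`. -/

theorem Finset.sum_range_ite_eq_or_eq_succ {M : Type*} [AddCommMonoid M] (f : ℕ → M)
    {a m : ℕ} (ha : a < m) :
    ∑ j ∈ Finset.range m, (if j = a ∨ j = a + 1 then f j else 0) =
      f a + if a + 1 < m then f (a + 1) else 0 := by
  have hsplit : ∀ j, (if j = a ∨ j = a + 1 then f j else 0) =
      (if j = a then f j else 0) + (if j = a + 1 then f j else 0) := by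
    intro j
    by_cases h : j = a <;> simp [h]
  simp only [hsplit, Finset.sum_add_distrib, Finset.sum_ite_eq', Finset.mem_range, if_pos ha]

namespace Matrix

section Nilpotent

variable {n : ℕ} {c : F} {M : Matrix (Fin n) (Fin n) F}

theorem pow_apply_eq_zero_of_lt (hM : ∀ i j : Fin n, (j : ℕ) ≤ i → M i j = 0) :
    ∀ (k : ℕ) (i j : Fin n), (j : ℕ) < i + k → (M ^ k) i j = 0 := by
  intro k
  induction k with
  | zero =>
    intro i j h
    exact one_apply_ne (by rintro rfl; omega)
  | succ k ih =>
    intro i j h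
    rw [pow_succ', mul_apply]
    refine Finset.sum_eq_zero fun t _ => ?_
    rcases le_or_gt (t : ℕ) i with hti | hti
    · rw [hM i t hti, zero_mul]
    · rw [ih t j (by omega), mul_zero]

theorem pow_apply_eq_pow_of_eq_add (hM : ∀ i j : Fin n, (j : ℕ) ≤ i → M i j = 0)
    (hc : ∀ i j : Fin n, (j : ℕ) = i + 1 → M i j = c) :
    ∀ (k : ℕ) (i j : Fin n), (j : ℕ) = i + k → (M ^ k) i j = c ^ k := by
  intro k
  induction k with
  | zero =>
    intro i j h
    rw [pow_zero, pow_zero, Fin.ext (by omega : (i : ℕ) = j), one_apply_eq]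
  | succ k ih =>
    intro i j h
    have hi : (i : ℕ) + 1 < n := by omega
    rw [pow_succ', mul_apply, Finset.sum_eq_single ⟨i + 1, hi⟩, hc _ _ rfl,
      ih _ _ (by simp only; omega), pow_succ']
    · intro t _ ht
      have ht' : (t : ℕ) ≠ i + 1 := fun e => ht (Fin.ext e)
      rcases le_or_gt (t : ℕ) i with hti | hti
      · rw [hM i t hti, zero_mul]
      · rw [pow_apply_eq_zero_of_lt hM k t j (by omega), mul_zero]
    · simp

theorem jordanBlock_eq_smul_one_add (lam : F) :
    jordanBlock n lam = lam • (1 : Matrix (Fin n) (Fin n) F) + jordanBlock n 0 := by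
  ext i j
  simp only [jordanBlock, of_apply, add_apply, smul_apply, one_apply, Fin.ext_iff, smul_eq_mul]
  split_ifs <;> simp

def krylov (M : Matrix (Fin n) (Fin n) F) (v : Fin n → F) : Matrix (Fin n) (Fin n) F :=
  of fun i k => (M ^ (k : ℕ) *ᵥ v) i

theorem mul_krylov {v : Fin n → F} (hv : M ^ n *ᵥ v = 0) :
    M * krylov M v = krylov M v * jordanBlock n 0 := by
  ext i k
  have hleft : (M * krylov M v) i k = (M ^ ((k : ℕ) + 1) *ᵥ v) i := by
    rw [pow_succ', ← mulVec_mulVec]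
    rfl
  rw [hleft, mul_apply]
  by_cases hk : (k : ℕ) + 1 < n
  · rw [Finset.sum_eq_single ⟨k + 1, hk⟩]
    · simp [krylov, jordanBlock]
    · intro j _ hj
      have hj' : (j : ℕ) ≠ k + 1 := fun e => hj (Fin.ext e)
      simp [jordanBlock, hj']
    · simp
  · have hkn : (k : ℕ) + 1 = n := by omega
    rw [hkn, hv, Finset.sum_eq_zero]
    · rfl
    · intro j _
      have hj' : (j : ℕ) ≠ k + 1 := by omega
      simp [jordanBlock, hj']

end Nilpotent

section Cyclic

variable {m : ℕ}

theorem isUnit_krylov_single_last {c : F} {M : Matrix (Fin (m + 1)) (Fin (m + 1)) F}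
    (hM : ∀ i j : Fin (m + 1), (j : ℕ) ≤ i → M i j = 0)
    (hc : ∀ i j : Fin (m + 1), (j : ℕ) = i + 1 → M i j = c) (hc0 : c ≠ 0) :
    IsUnit (krylov M (Pi.single (Fin.last m) 1)) := by
  set K := krylov M (Pi.single (Fin.last m) 1)
  have hK : ∀ i k, K i k = (M ^ (k : ℕ)) i (Fin.last m) := fun i k => by
    simp [K, krylov]
  -- Reversing the columns makes `K` upper triangular, with `c ^ (m - i)` on the diagonal.
  have htri : (K.submatrix id Fin.revPerm).IsUpperTriangular := by
    intro i k hki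
    have : (k : ℕ) < i := hki
    simp only [submatrix_apply, id_eq, Fin.revPerm_apply, hK]
    exact pow_apply_eq_zero_of_lt hM _ _ _ (by simp; omega)
  have hdet : (K.submatrix id Fin.revPerm).det = ∏ i : Fin (m + 1), c ^ (m - (i : ℕ)) := by
    rw [det_of_isUpperTriangular htri]
    refine Finset.prod_congr rfl fun i _ => ?_
    simp only [submatrix_apply, id_eq, Fin.revPerm_apply, hK, Fin.val_rev]
    rw [show m + 1 - ((i : ℕ) + 1) = m - i by omega]
    exact pow_apply_eq_pow_of_eq_add hM hc _ _ _ (by rw [Fin.val_last]; omega)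
  rw [isUnit_iff_isUnit_det, isUnit_iff_ne_zero]
  intro h0
  rw [det_permute', h0, mul_zero, eq_comm] at hdet
  exact Finset.prod_ne_zero_iff.mpr (fun i _ => pow_ne_zero _ hc0) hdet

theorem matSimilar_smul_one_add_jordanBlock {c : F} {M : Matrix (Fin (m + 1)) (Fin (m + 1)) F}
    (hM : ∀ i j : Fin (m + 1), (j : ℕ) ≤ i → M i j = 0)
    (hc : ∀ i j : Fin (m + 1), (j : ℕ) = i + 1 → M i j = c) (hc0 : c ≠ 0) (lam : F) :
    MatSimilar (lam • 1 + M) (jordanBlock (m + 1) lam) := by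
  set K := krylov M (Pi.single (Fin.last m) 1)
  have hK : IsUnit K := isUnit_krylov_single_last hM hc hc0
  have hnil : M ^ (m + 1) = 0 := by
    ext i j
    exact pow_apply_eq_zero_of_lt hM _ i j (by omega)
  have hcomm : (lam • 1 + M) * K = K * jordanBlock (m + 1) lam := by
    rw [jordanBlock_eq_smul_one_add lam, add_mul, mul_krylov (by rw [hnil, zero_mulVec]), mul_add,
      smul_mul, Matrix.mul_smul, one_mul, mul_one]
  refine ⟨K, hK, ?_⟩
  rw [mul_assoc, hcomm, ← mul_assoc, nonsing_inv_mul _ ((isUnit_iff_isUnit_det K).mp hK), one_mul]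

def strictUpperConst (r : ℕ) (c : F) : Matrix (Fin r) (Fin r) F :=
  of fun i j => if i < j then c else 0

theorem matSimilar_smul_one_add_strictUpperConst {c : F} (hc0 : c ≠ 0) (lam : F) :
    MatSimilar (lam • 1 + strictUpperConst (m + 1) c) (jordanBlock (m + 1) lam) :=
  matSimilar_smul_one_add_jordanBlock (fun i j hji => if_neg (by rw [Fin.lt_def]; omega))
    (fun i j hji => if_pos (by rw [Fin.lt_def]; omega)) hc0 lam

end Cyclic

end Matrix

def gamInv (r : ℕ) : Matrix (Fin r) (Fin r) F :=
  of fun i j => if (i : ℕ) + j < r then (-1) ^ (i : ℕ) else 0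

section Gam

variable {n : ℕ}

theorem Gam_succ_apply (i j : Fin (n + 1)) :
    (Gam (n + 1) : Matrix (Fin (n + 1)) (Fin (n + 1)) F) i j =
      if (j : ℕ) = n - i ∨ (j : ℕ) = n - i + 1 then (-1) ^ (n - i) else 0 := by
  have := i.isLt
  simp only [Gam, of_apply, Nat.add_sub_cancel]
  exact if_congr (by omega) rfl rfl

theorem Gam_succ_apply' (i j : Fin (n + 1)) :
    (Gam (n + 1) : Matrix (Fin (n + 1)) (Fin (n + 1)) F) i j =
      if (i : ℕ) = n - j ∨ (i : ℕ) = n - j + 1 then (-1) ^ (n - i) else 0 := by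
  have := j.isLt
  rw [Gam_succ_apply]
  exact if_congr (by omega) rfl rfl

theorem Gam_mul_gamInv :
    (Gam (n + 1) : Matrix (Fin (n + 1)) (Fin (n + 1)) F) * gamInv (n + 1) = 1 := by
  ext i k
  have hi := i.isLt
  have hs : (-1 : F) ^ (n - i) * (-1) ^ (n - i) = 1 := by
    rw [← mul_pow, neg_one_mul, neg_neg, one_pow]
  simp only [mul_apply, Gam_succ_apply, ite_mul, zero_mul, gamInv, of_apply]
  rw [Fin.sum_univ_eq_sum_range (fun j => if j = n - i ∨ j = n - i + 1 then
      (-1) ^ (n - i) * (if j + k < n + 1 then (-1 : F) ^ j else 0) else 0),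
    Finset.sum_range_ite_eq_or_eq_succ _ (by omega), pow_succ]
  simp only [one_apply, Fin.ext_iff]
  split_ifs <;> first | (exfalso; omega) | linear_combination hs | ring1

theorem gamInv_transpose_mul_Gam :
    (gamInv (n + 1))ᵀ * (Gam (n + 1) : Matrix (Fin (n + 1)) (Fin (n + 1)) F) =
      (-1 : F) ^ n • 1 + strictUpperConst (n + 1) (2 * (-1) ^ n) := by
  ext i k
  have hk := k.isLt
  have hpow : ∀ a, a ≤ n → (-1 : F) ^ a * (-1) ^ (n - a) = (-1) ^ n := fun a ha => by
    rw [← pow_add, Nat.add_sub_cancel' ha]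
  simp only [mul_apply, transpose_apply, Gam_succ_apply', mul_ite, mul_zero, gamInv, of_apply]
  rw [Fin.sum_univ_eq_sum_range (fun j => if j = n - k ∨ j = n - k + 1 then
      (if j + i < n + 1 then (-1 : F) ^ j else 0) * (-1) ^ (n - j) else 0),
    Finset.sum_range_ite_eq_or_eq_succ _ (by omega)]
  simp only [Matrix.add_apply, Matrix.smul_apply, one_apply, strictUpperConst, of_apply,
    Fin.ext_iff, Fin.lt_def]
  split_ifs <;> first
    | (exfalso; omega)
    | (simp (disch := omega) only [hpow, zero_mul, add_zero]; simp [two_mul])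

end Gam

/-- `Γ_r` is invertible and `Γ_r⁻ᵀΓ_r` is similar to `J_r((-1)^(r+1))`. -/
theorem stmt_10 {F : Type*} [Field F] (hchar : (2 : F) ≠ 0) (r : ℕ) (hr : 1 ≤ r) :
    IsUnit (Gam r : Matrix (Fin r) (Fin r) F) ∧
      MatSimilar ((Gam r : Matrix (Fin r) (Fin r) F)⁻¹ᵀ * Gam r)
        (jordanBlock r ((-1 : F) ^ (r + 1))) := by
  obtain ⟨n, rfl⟩ : ∃ n, r = n + 1 := ⟨r - 1, by omega⟩
  have hinv : (Gam (n + 1) : Matrix (Fin (n + 1)) (Fin (n + 1)) F) * gamInv (n + 1) = 1 :=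
    Gam_mul_gamInv
  refine ⟨(isUnit_iff_isUnit_det _).mpr (isUnit_det_of_right_inverse hinv), ?_⟩
  rw [inv_eq_right_inv hinv, gamInv_transpose_mul_Gam,
    show (-1 : F) ^ (n + 1 + 1) = (-1) ^ n by ring]
  have h2 : (2 * (-1) ^ n : F) ≠ 0 := mul_ne_zero hchar (pow_ne_zero _ (by norm_num))
  exact matSimilar_smul_one_add_strictUpperConst h2 _
end

section
/- Let F be a field of characteristic different from 2, let p(x) be a monic irreducible polynomial over F, let l ≥ 1, and let Φ be the m×m companion matrix of p(x)^l. If Φ is a cosquare and m is odd, then p(x) = x − 1. -/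
open Matrix Polynomial

variable {F : Type*} [Field F]

/-!
Write `Φ = Q⁻ᵀQ`. Then `1 - Φ = Q⁻ᵀ(Qᵀ - Q)`, and `Qᵀ - Q` is skew-symmetric of odd size,
hence singular when `2 ≠ 0`; so `1` is an eigenvalue of `Φ`. The companion matrix of `p ^ l`
is the matrix of multiplication by `X` on `F[X]/(p ^ l)`, so its characteristic polynomial is
`p ^ l`. Hence `p(1) = 0`, and an irreducible monic `p` with root `1` is `X - 1`.
-/

namespace Matrix

theorem det_eq_zero_of_transpose_eq_neg {n R : Type*} [Fintype n] [DecidableEq n] [CommRing R]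
    [NoZeroDivisors R] (h2 : (2 : R) ≠ 0) {A : Matrix n n R} (hA : Aᵀ = -A)
    (hn : Odd (Fintype.card n)) : A.det = 0 := by
  have h : A.det = -A.det := calc
    A.det = Aᵀ.det := (det_transpose A).symm
    _ = -A.det := by rw [hA, det_neg, hn.neg_one_pow, neg_one_mul]
  have h' : (2 : R) * A.det = 0 := by linear_combination h
  exact (mul_eq_zero.mp h').resolve_left h2

end Matrix

theorem IsCosquare.det_one_sub_eq_zero {m : ℕ} {Φ : Matrix (Fin m) (Fin m) F}
    (hΦ : IsCosquare Φ) (h2 : (2 : F) ≠ 0) (hm : Odd m) : (1 - Φ).det = 0 := by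
  obtain ⟨Q, hQ, rfl⟩ := hΦ
  have hQQ : Q * Q⁻¹ = 1 := Q.mul_nonsing_inv ((Q.isUnit_iff_isUnit_det).mp hQ)
  have hfactor : 1 - Q⁻¹ᵀ * Q = Q⁻¹ᵀ * (Qᵀ - Q) := by
    rw [Matrix.mul_sub, ← Matrix.transpose_mul, hQQ, Matrix.transpose_one]
  have hskew : (Qᵀ - Q).det = 0 :=
    Matrix.det_eq_zero_of_transpose_eq_neg h2 (by simp) (by simpa using hm)
  rw [hfactor, Matrix.det_mul, hskew, mul_zero]

section AdjoinRoot

open AdjoinRoot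

theorem companion_eq_leftMulMatrix {q : F[X]} (hq : q.Monic) :
    companion q = Algebra.leftMulMatrix (powerBasisAux' hq) (root q) := by
  ext i j
  have hb : (powerBasisAux' hq) j = root q ^ (j : ℕ) := congr_fun (powerBasis' hq).coe_basis j
  rw [Algebra.leftMulMatrix_eq_repr_mul, hb, ← pow_succ', ← mk_X, ← map_pow,
    powerBasisAux'_repr_apply_to_fun, modByMonicHom_mk]
  simp only [companion, Matrix.of_apply]
  by_cases hj : (j : ℕ) = q.natDegree - 1
  · -- `X ^ n ≡ X ^ n - q` modulo `q`, and `X ^ n - q` already has degree `< n`.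
    have hn : (j : ℕ) + 1 = q.natDegree := by omega
    have hdeg : (X ^ q.natDegree : F[X]).degree = q.degree := by
      rw [degree_X_pow, degree_eq_natDegree hq.ne_zero]
    have hlt : (X ^ q.natDegree - q).degree < q.degree := hdeg ▸ degree_sub_lt_left hdeg
      (pow_ne_zero _ X_ne_zero) (by rw [leadingCoeff_X_pow, hq.leadingCoeff])
    rw [if_pos hj, hn, modByMonic_eq_of_dvd_sub hq (p₂ := X ^ q.natDegree - q) (by simp),
      (modByMonic_eq_self_iff hq).mpr hlt, coeff_sub, coeff_X_pow, if_neg (by omega), zero_sub]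
  · have hlt : (X ^ ((j : ℕ) + 1) : F[X]).degree < q.degree := by
      rw [degree_X_pow, degree_eq_natDegree hq.ne_zero]
      exact_mod_cast (by omega)
    rw [if_neg hj, (modByMonic_eq_self_iff hq).mpr hlt, coeff_X_pow]

theorem charpoly_companion {q : F[X]} (hq : q.Monic) : (companion q).charpoly = q := by
  rw [companion_eq_leftMulMatrix hq]
  refine (charpoly_leftMulMatrix (powerBasis' hq)).trans ?_
  rw [powerBasis'_gen, minpoly_root hq.ne_zero, hq.leadingCoeff, inv_one, C_1, mul_one]

end AdjoinRoot

theorem stmt_12_general {F : Type*} [Field F] (hchar : (2 : F) ≠ 0) (p : Polynomial F)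
    (hp : p.Monic) (hirr : Irreducible p) (l : ℕ)
    (hcos : IsCosquare (companion (p ^ l))) (hodd : Odd ((p ^ l).natDegree)) :
    p = Polynomial.X - 1 := by
  have hroot : (p ^ l).eval 1 = 0 := by
    rw [← charpoly_companion (hp.pow l), Matrix.eval_charpoly, map_one]
    exact hcos.det_one_sub_eq_zero hchar hodd
  have hp1 : aeval (1 : F) p = 0 := by
    simpa using eq_zero_of_pow_eq_zero (by rwa [eval_pow] at hroot)
  rw [minpoly.eq_of_irreducible_of_monic hirr hp1 hp, minpoly.eq_X_sub_C', C_1]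

/-- if the companion matrix of `p^l` (`p` monic irreducible, `l ≥ 1`) is a
cosquare of odd size, then `p = x - 1`. -/
theorem stmt_12 {F : Type*} [Field F] (hchar : (2 : F) ≠ 0) (p : Polynomial F)
    (hp : p.Monic) (hirr : Irreducible p) (l : ℕ) (hl : 1 ≤ l)
    (hcos : IsCosquare (companion (p ^ l))) (hodd : Odd ((p ^ l).natDegree)) :
    p = Polynomial.X - 1 :=
  stmt_12_general hchar p hp hirr l hcos hodd
end
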